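/- arXiv:math/9411208 — 3 statements merged into one kernel-verified Lean document; each statement's English description precedes it below -/
import Mathlib

section
/- For every linearly ordered set I, the scale poset P(I) is a semi-Cohen poset. -/
universe u v

/-- A condition in the scale poset over a linear order `I`: a finite partial function `p` on `I`
together with `n_p ∈ ℕ` such that `p α ∈ ℕ^{n_p}` for `α ∈ dom p`; junk value `0` elsewhere. -/
@[ext] structure ScaleCond (I : Type u) : Type u where
  len : ℕ
  dom : Finset I
  f : I → ℕ → ℕ
  junk : ∀ α i, α ∉ dom ∨ len ≤ i → f α i = 0

/-- The order of the scale poset. -/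
instance ScaleCond.instPartialOrder (I : Type u) [LinearOrder I] :
    PartialOrder (ScaleCond I) where
  le p q := q.dom ⊆ p.dom ∧ q.len ≤ p.len ∧
    (∀ α ∈ q.dom, ∀ i < q.len, p.f α i = q.f α i) ∧
    (∀ i, q.len ≤ i → i < p.len → ∀ β ∈ q.dom, ∀ α ∈ q.dom, β < α → p.f β i ≤ p.f α i)
  le_refl p := ⟨Finset.Subset.refl _, le_refl _, fun _ _ _ _ => rfl,
    fun i hi hi' => absurd hi' (by omega)⟩
  le_trans p q r hpq hqr := by
    obtain ⟨hd1, hn1, hv1, hg1⟩ := hpq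
    obtain ⟨hd2, hn2, hv2, hg2⟩ := hqr
    refine ⟨hd2.trans hd1, hn2.trans hn1, ?_, ?_⟩
    · intro α hα i hi
      rw [hv1 α (hd2 hα) i (lt_of_lt_of_le hi hn2), hv2 α hα i hi]
    · intro i hi hi' β hβ α hα hβα
      by_cases hq : i < q.len
      · rw [hv1 β (hd2 hβ) i hq, hv1 α (hd2 hα) i hq]
        exact hg2 i hi hq β hβ α hα hβα
      · exact hg1 i (by omega) hi' β (hd2 hβ) α (hd2 hα) hβα
  le_antisymm p q hpq hqp := by
    obtain ⟨hd1, hn1, hv1, -⟩ := hpq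
    obtain ⟨hd2, hn2, hv2, -⟩ := hqp
    have hdom : p.dom = q.dom := Finset.Subset.antisymm hd2 hd1
    have hlen : p.len = q.len := le_antisymm hn2 hn1
    have hf : p.f = q.f := by
      funext α i
      by_cases hα : α ∈ q.dom
      · by_cases hi : i < q.len
        · exact hv1 α hα i hi
        · rw [p.junk α i (Or.inr (by omega)), q.junk α i (Or.inr (by omega))]
      · rw [p.junk α i (Or.inl (hdom ▸ hα)), q.junk α i (Or.inl hα)]
    exact ScaleCond.ext hlen hdom hf

/-- Two elements of a preordered set are compatible if they have a common lower bound. -/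
def PosetCompat {P : Type u} [Preorder P] (p q : P) : Prop :=
  ∃ r, r ≤ p ∧ r ≤ q

/-- `R` is a regular subposet of `P`: for every `p₀ ∈ P` there is `p₁ ∈ R` such that every
`p₂ ∈ R` with `p₂ ≤ p₁` is compatible with `p₀`. -/
def IsRegularSubposet {P : Type u} [Preorder P] (R : Set P) : Prop :=
  ∀ p₀ : P, ∃ p₁ ∈ R, ∀ p₂ ∈ R, p₂ ≤ p₁ → PosetCompat p₂ p₀

/-- `C` is a club (closed unbounded) collection of countable subsets of `X`: all members are
countable, `C` is closed under unions of nonempty countable `⊆`-increasing chains, and every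
countable subset of `X` is contained in some member of `C`. -/
def IsClubIn (X : Type u) (C : Set (Set X)) : Prop :=
  (∀ S ∈ C, S.Countable) ∧
  (∀ 𝒞 : Set (Set X), 𝒞.Nonempty → 𝒞.Countable → 𝒞 ⊆ C → IsChain (· ⊆ ·) 𝒞 → ⋃₀ 𝒞 ∈ C) ∧
  (∀ S : Set X, S.Countable → ∃ T ∈ C, S ⊆ T)

/-- A poset `P` is semi-Cohen if the collection of its countable regular subposets contains a
club collection of countable subsets of `P`. -/
def SemiCohenPoset (P : Type u) [Preorder P] : Prop :=
  ∃ C : Set (Set P), IsClubIn P C ∧ ∀ R ∈ C, IsRegularSubposet R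


/-! The conditions whose domain lies in a countable set `J ⊆ I` form a countable subposet
`P(J)`, and these subposets form a club, because a finite domain inside a directed union of
sets lies in one of them. Each `P(J)` is regular, witnessed by the restriction `p₀ ↾ J`: if
`p₂ ∈ P(J)` extends `p₀ ↾ J`, a common extension of `p₂` and `p₀` keeps `p₂` on its domain and
`p₀` below `n_{p₀}`, and on the new levels puts at each remaining point `α` the maximum of `p₂`
over the points of `dom p₀ ∩ dom p₂` below `α`. That maximum is monotone in `α` and agrees with
`p₂` on `dom p₀ ∩ dom p₂`, where `p₂` is already monotone on the new levels. -/

theorem Finset.sup_filter_le_eq_of_monotoneOn {ι α : Type*} [Preorder ι] [DecidableLE ι]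
    [SemilatticeSup α] [OrderBot α] {s : Finset ι} {g : ι → α} (hg : MonotoneOn g s)
    {a : ι} (ha : a ∈ s) : (s.filter (· ≤ a)).sup g = g a :=
  le_antisymm
    (Finset.sup_le fun _ hb => hg (Finset.mem_filter.1 hb).1 ha (Finset.mem_filter.1 hb).2)
    (Finset.le_sup (Finset.mem_filter.2 ⟨ha, le_rfl⟩))

namespace ScaleCond

variable {I : Type u}

def supportedIn (J : Set I) : Set (ScaleCond I) := {p | ↑p.dom ⊆ J}

theorem supportedIn_subset_supportedIn_iff {J K : Set I} :
    supportedIn J ⊆ supportedIn K ↔ J ⊆ K := by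
  refine ⟨fun h α hα => ?_, fun h p hp => hp.trans h⟩
  let atom : ScaleCond I := ⟨0, {α}, fun _ _ => 0, fun _ _ _ => rfl⟩
  have hatom : atom ∈ supportedIn J := by simpa [supportedIn, atom] using hα
  simpa [supportedIn, atom] using h hatom

theorem supportedIn_injective : Function.Injective (supportedIn (I := I)) := fun _ _ h =>
  (supportedIn_subset_supportedIn_iff.1 h.le).antisymm (supportedIn_subset_supportedIn_iff.1 h.ge)

theorem sUnion_mem_image_supportedIn {𝒞 : Set (Set (ScaleCond I))} (hne : 𝒞.Nonempty)
    (hcount : 𝒞.Countable) (hsub : 𝒞 ⊆ supportedIn '' {J | J.Countable})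
    (hchain : IsChain (· ⊆ ·) 𝒞) : ⋃₀ 𝒞 ∈ supportedIn '' {J | J.Countable} := by
  set 𝒥 := supportedIn ⁻¹' 𝒞
  have h𝒥count : ∀ J ∈ 𝒥, J.Countable := by
    intro J hJ
    obtain ⟨K, hK, hKJ⟩ := hsub hJ
    exact supportedIn_injective hKJ ▸ hK
  have h𝒥chain : IsChain (· ⊆ ·) 𝒥 := fun J hJ K hK hJK =>
    (hchain hJ hK (supportedIn_injective.ne hJK)).imp
      supportedIn_subset_supportedIn_iff.1 supportedIn_subset_supportedIn_iff.1
  have h𝒥ne : 𝒥.Nonempty := by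
    obtain ⟨R, hR⟩ := hne
    obtain ⟨J, -, rfl⟩ := hsub hR
    exact ⟨J, hR⟩
  refine ⟨⋃₀ 𝒥, (hcount.preimage supportedIn_injective).sUnion h𝒥count, ?_⟩
  ext p
  constructor
  · intro hp
    obtain ⟨J, hJ, hpJ⟩ := h𝒥chain.directedOn.exists_mem_subset_of_finite_of_subset_sUnion
      h𝒥ne p.dom.finite_toSet hp
    exact ⟨_, hJ, hpJ⟩
  · rintro ⟨R, hR, hpR⟩
    obtain ⟨J, -, rfl⟩ := hsub hR
    exact fun α hα => ⟨J, hR, hpR hα⟩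

def graph (p : ScaleCond I) : Set (I × ℕ × ℕ) :=
  (fun x => (x.1, x.2, p.f x.1 x.2)) '' (↑p.dom ×ˢ Set.Iio p.len)

def restrict (J : Set I) [DecidablePred (· ∈ J)] (p : ScaleCond I) : ScaleCond I where
  len := p.len
  dom := p.dom.filter (· ∈ J)
  f α i := if α ∈ J then p.f α i else 0
  junk α i h := by
    split_ifs with hα
    · exact p.junk α i (h.imp_left fun h' hp => h' (Finset.mem_filter.2 ⟨hp, hα⟩))
    · rfl

theorem restrict_mem_supportedIn (J : Set I) [DecidablePred (· ∈ J)] (p : ScaleCond I) :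
    p.restrict J ∈ supportedIn J := fun _ hα =>
  (Finset.mem_filter.1 hα).2

variable [LinearOrder I]

theorem eq_of_agree {p q : ScaleCond I} (hlen : p.len = q.len) (hdom : p.dom = q.dom)
    (hf : ∀ α ∈ p.dom, ∀ i < p.len, p.f α i = q.f α i) : p = q := by
  refine le_antisymm ?_ ?_
  · exact ⟨hdom.ge, hlen.ge, fun α hα i hi => hf α (hdom ▸ hα) i (hlen ▸ hi),
      fun i hi hi' => absurd hi' (by omega)⟩
  · exact ⟨hdom.le, hlen.le, fun α hα i hi => (hf α hα i hi).symm,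
      fun i hi hi' => absurd hi' (by omega)⟩

theorem eq_of_graph_eq {p q : ScaleCond I} (hlen : p.len = q.len) (hdom : p.dom = q.dom)
    (hgraph : p.graph = q.graph) : p = q := by
  refine eq_of_agree hlen hdom fun α hα i hi => ?_
  have hmem : (α, i, p.f α i) ∈ q.graph := hgraph ▸ ⟨(α, i), ⟨hα, hi⟩, rfl⟩
  obtain ⟨⟨β, j⟩, -, hβj⟩ := hmem
  simp only [Prod.mk.injEq] at hβj
  obtain ⟨rfl, rfl, h⟩ := hβj
  exact h.symm

theorem countable_supportedIn {J : Set I} (hJ : J.Countable) : (supportedIn J).Countable := by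
  refine Set.MapsTo.countable_of_injOn (f := fun p => (p.len, (p.dom : Set I), p.graph))
    (t := Set.univ ×ˢ {D | D.Finite ∧ D ⊆ J} ×ˢ {G | G.Finite ∧ G ⊆ J ×ˢ Set.univ})
    ?_ ?_ ?_
  · intro p hp
    refine ⟨Set.mem_univ _, ⟨p.dom.finite_toSet, hp⟩, ?_, ?_⟩
    · exact (p.dom.finite_toSet.prod (Set.finite_Iio _)).image _
    · rintro _ ⟨x, hx, rfl⟩
      exact ⟨hp hx.1, Set.mem_univ _⟩
  · intro p _ q _ h
    simp only [Prod.mk.injEq, Finset.coe_inj] at h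
    exact eq_of_graph_eq h.1 h.2.1 h.2.2
  · exact Set.countable_univ.prod ((Set.countable_ofPred_finite_subset hJ).prod
      (Set.countable_ofPred_finite_subset (hJ.prod Set.countable_univ)))

theorem isClubIn_image_supportedIn :
    IsClubIn (ScaleCond I) (supportedIn '' {J | J.Countable}) := by
  refine ⟨?_, fun 𝒞 => sUnion_mem_image_supportedIn, fun S hS => ?_⟩
  · rintro _ ⟨J, hJ, rfl⟩
    exact countable_supportedIn hJ
  · refine ⟨_, ⟨⋃ p ∈ S, ↑p.dom, hS.biUnion fun p _ => p.dom.countable_toSet, rfl⟩, ?_⟩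
    exact fun p hp _ hα => Set.mem_biUnion hp hα

theorem restrict_le_restrict {J K : Set I} [DecidablePred (· ∈ J)] [DecidablePred (· ∈ K)]
    (hKJ : K ⊆ J) (p : ScaleCond I) : p.restrict J ≤ p.restrict K := by
  refine ⟨fun α hα => ?_, le_rfl, fun α hα i _ => ?_, fun i hi hi' => absurd hi' (not_lt.2 hi)⟩
  · obtain ⟨hp, hK⟩ := Finset.mem_filter.1 hα
    exact Finset.mem_filter.2 ⟨hp, hKJ hK⟩
  · have hK := (Finset.mem_filter.1 hα).2
    simp only [restrict, if_pos hK, if_pos (hKJ hK)]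

def amalgam (p q : ScaleCond I) : ScaleCond I where
  len := p.len
  dom := p.dom ∪ q.dom
  f α i :=
    if α ∈ p.dom then p.f α i
    else if α ∈ q.dom ∧ i < p.len then
      if i < q.len then q.f α i else ((q.dom ∩ p.dom).filter (· ≤ α)).sup (p.f · i)
    else 0
  junk α i h := by
    by_cases hp : α ∈ p.dom
    · rw [if_pos hp]
      exact p.junk α i (h.imp_left fun h' => h' ∘ Finset.mem_union_left _)
    · have hq : ¬(α ∈ q.dom ∧ i < p.len) := fun ⟨hq, hi⟩ =>
        h.elim (· (Finset.mem_union_right _ hq)) fun h' => absurd hi (not_lt.2 h')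
      rw [if_neg hp, if_neg hq]

theorem amalgam_le_left (p q : ScaleCond I) : amalgam p q ≤ p :=
  ⟨Finset.subset_union_left, le_rfl, fun α hα i _ => if_pos hα,
    fun i hi hi' => absurd hi' (by simp only [amalgam]; omega)⟩

theorem amalgam_le_right {p q : ScaleCond I} (hlen : q.len ≤ p.len)
    (hval : ∀ α ∈ q.dom, α ∈ p.dom → ∀ i < q.len, p.f α i = q.f α i)
    (hmono : ∀ i, q.len ≤ i → i < p.len → MonotoneOn (p.f · i) ↑(q.dom ∩ p.dom)) :
    amalgam p q ≤ q := by
  have hnew : ∀ α ∈ q.dom, ∀ i, q.len ≤ i → i < p.len →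
      (amalgam p q).f α i = ((q.dom ∩ p.dom).filter (· ≤ α)).sup (p.f · i) := by
    intro α hα i hi hi'
    by_cases hp : α ∈ p.dom
    · rw [Finset.sup_filter_le_eq_of_monotoneOn (hmono i hi hi')
        (Finset.mem_inter.2 ⟨hα, hp⟩)]
      exact if_pos hp
    · simp only [amalgam, if_neg hp, if_pos (And.intro hα hi'), if_neg (not_lt.2 hi)]
  refine ⟨Finset.subset_union_right, hlen, fun α hα i hi => ?_, fun i hi hi' β hβ α hα hβα => ?_⟩
  · by_cases hp : α ∈ p.dom
    · exact (if_pos hp).trans (hval α hα hp i hi)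
    · simp only [amalgam, if_neg hp, if_pos (And.intro hα (hi.trans_le hlen)), if_pos hi]
  · rw [hnew β hβ i hi hi', hnew α hα i hi hi']
    exact Finset.sup_mono (Finset.monotone_filter_right _ fun _ _ hγ => hγ.trans hβα.le)

theorem compatible_of_le_restrict {p q : ScaleCond I} (h : p ≤ q.restrict ↑p.dom) :
    PosetCompat p q := by
  obtain ⟨-, hlen, hval, hmono⟩ := h
  refine ⟨amalgam p q, amalgam_le_left p q, amalgam_le_right hlen ?_ ?_⟩
  · intro α hα hp i hi
    rw [hval α (Finset.mem_filter.2 ⟨hα, hp⟩) i hi]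
    exact if_pos hp
  · intro i hi hi'
    refine monotoneOn_iff_forall_lt.2 fun β hβ α hα hβα => ?_
    simp only [Finset.coe_inter, Set.mem_inter_iff, Finset.mem_coe] at hβ hα
    exact hmono i hi hi' β (Finset.mem_filter.2 hβ) α (Finset.mem_filter.2 hα) hβα

theorem isRegularSubposet_supportedIn (J : Set I) : IsRegularSubposet (supportedIn J) := by
  classical
  exact fun q => ⟨q.restrict J, restrict_mem_supportedIn J q, fun _ hp hpq =>
    compatible_of_le_restrict (hpq.trans (restrict_le_restrict hp q))⟩

end ScaleCond

theorem stmt4 (I : Type u) [LinearOrder I] : SemiCohenPoset (ScaleCond I) := by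
  refine ⟨_, ScaleCond.isClubIn_image_supportedIn, ?_⟩
  rintro _ ⟨J, -, rfl⟩
  exact ScaleCond.isRegularSubposet_supportedIn J
end

section
/- For every set I, the eventually-different poset P_ed(I) is a semi-Cohen poset. -/
universe u v

/-- A condition in the eventually-different poset over `I`. -/
@[ext] structure EDCond (I : Type u) : Type u where
  len : ℕ
  dom : Finset I
  f : I → ℕ → ℕ
  junk : ∀ α i, α ∉ dom ∨ len ≤ i → f α i = 0

/-- The order of the eventually-different poset. -/
instance EDCond.instPartialOrder (I : Type u) : PartialOrder (EDCond I) where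
  le p q := q.dom ⊆ p.dom ∧ q.len ≤ p.len ∧
    (∀ α ∈ q.dom, ∀ i < q.len, p.f α i = q.f α i) ∧
    (∀ i, q.len ≤ i → i < p.len → ∀ α ∈ q.dom, ∀ β ∈ q.dom, α ≠ β → p.f α i ≠ p.f β i)
  le_refl p := ⟨Finset.Subset.refl _, le_refl _, fun _ _ _ _ => rfl,
    fun i hi hi' => absurd hi' (by omega)⟩
  le_trans p q r hpq hqr := by
    obtain ⟨hd1, hn1, hv1, hg1⟩ := hpq
    obtain ⟨hd2, hn2, hv2, hg2⟩ := hqr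
    refine ⟨hd2.trans hd1, hn2.trans hn1, ?_, ?_⟩
    · intro α hα i hi
      rw [hv1 α (hd2 hα) i (lt_of_lt_of_le hi hn2), hv2 α hα i hi]
    · intro i hi hi' α hα β hβ hαβ
      by_cases hq : i < q.len
      · rw [hv1 α (hd2 hα) i hq, hv1 β (hd2 hβ) i hq]
        exact hg2 i hi hq α hα β hβ hαβ
      · exact hg1 i (by omega) hi' α (hd2 hα) β (hd2 hβ) hαβ
  le_antisymm p q hpq hqp := by
    obtain ⟨hd1, hn1, hv1, -⟩ := hpq
    obtain ⟨hd2, hn2, hv2, -⟩ := hqp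
    have hdom : p.dom = q.dom := Finset.Subset.antisymm hd2 hd1
    have hlen : p.len = q.len := le_antisymm hn2 hn1
    have hf : p.f = q.f := by
      funext α i
      by_cases hα : α ∈ q.dom
      · by_cases hi : i < q.len
        · exact hv1 α hα i hi
        · rw [p.junk α i (Or.inr (by omega)), q.junk α i (Or.inr (by omega))]
      · rw [p.junk α i (Or.inl (hdom ▸ hα)), q.junk α i (Or.inl hα)]
    exact EDCond.ext hlen hdom hf

/-!
The club consists of the sets `{p | dom p ⊆ J}` for countable `J ⊆ I`. Each is countable, since
only countably many conditions share a given finite domain, and a union of a chain of them is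
again one of them, since domains are finite. Each is a regular subposet: for `p₀` take its
restriction `p₁` to `J`. A condition `p₂` with domain in `J` extending `p₁` agrees with `p₀` on
their common coordinates, so `p₂` and `p₀` amalgamate once the coordinates of `dom p₀ \ J` are
continued from `len p₀` to `len p₂` with values that are pairwise distinct and avoid all the
values of `p₂`.
-/

section Support

variable {P : Type u} {I : Type v} (supp : P → Finset I)

def supportedIn (J : Set I) : Set P := {p | ↑(supp p) ⊆ J}

variable {supp}

theorem countable_supportedIn (hfiber : ∀ d, {p | supp p = d}.Countable) {J : Set I}
    (hJ : J.Countable) : (supportedIn supp J).Countable := by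
  have hdoms : ((fun d : Finset I => (d : Set I)) ⁻¹' {t | t.Finite ∧ t ⊆ J}).Countable :=
    (Set.countable_ofPred_finite_subset hJ).preimage Finset.coe_injective
  refine (hdoms.biUnion fun d _ => hfiber d).mono fun p hp => ?_
  exact Set.mem_biUnion ⟨(supp p).finite_toSet, hp⟩ rfl

theorem subset_supportedIn_biUnion (S : Set P) :
    S ⊆ supportedIn supp (⋃ p ∈ S, ↑(supp p)) :=
  fun _ hp => Set.subset_biUnion_of_mem (u := fun p => (↑(supp p) : Set I)) hp

theorem sUnion_eq_supportedIn_of_isChain {𝒞 : Set (Set P)} (hne : 𝒞.Nonempty)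
    (h𝒞 : 𝒞 ⊆ Set.range (supportedIn supp)) (hchain : IsChain (· ⊆ ·) 𝒞) :
    ⋃₀ 𝒞 = supportedIn supp (⋃ S ∈ 𝒞, ⋃ p ∈ S, ↑(supp p)) := by
  refine Set.Subset.antisymm (fun p ⟨S, hS, hpS⟩ => ?_) fun p hp => ?_
  · exact (subset_supportedIn_biUnion S hpS).trans (Set.subset_biUnion_of_mem hS)
  have hdir : DirectedOn (fun S T => (⋃ q ∈ S, (↑(supp q) : Set I)) ⊆ ⋃ q ∈ T, ↑(supp q)) 𝒞 :=
    hchain.directedOn.mono fun _ _ hST => Set.biUnion_subset_biUnion_left hST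
  obtain ⟨S, hS, hpS⟩ := hdir.exists_mem_subset_of_finset_subset_biUnion hne hp
  obtain ⟨J, rfl⟩ := h𝒞 hS
  exact Set.mem_sUnion_of_mem (hpS.trans (Set.iUnion₂_subset fun q hq => hq)) hS

theorem isClubIn_supportedIn (hfiber : ∀ d, {p | supp p = d}.Countable) :
    IsClubIn P (supportedIn supp '' {J | J.Countable}) := by
  have hmem : ∀ S ∈ supportedIn supp '' {J | J.Countable}, S.Countable := by
    rintro _ ⟨J, hJ, rfl⟩
    exact countable_supportedIn hfiber hJ
  have hsupp : ∀ S : Set P, S.Countable → (⋃ p ∈ S, (↑(supp p) : Set I)).Countable :=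
    fun S hS => hS.biUnion fun p _ => (supp p).countable_toSet
  refine ⟨hmem, fun 𝒞 hne hcount h𝒞 hchain => ?_, fun S hS => ⟨_, ⟨_, hsupp S hS, rfl⟩,
    subset_supportedIn_biUnion S⟩⟩
  rw [sUnion_eq_supportedIn_of_isChain hne (h𝒞.trans (Set.image_subset_range _ _)) hchain]
  exact ⟨_, hcount.biUnion fun S hS => hsupp S (hmem S (h𝒞 hS)), rfl⟩

end Support

namespace EDCond

variable {I : Type u}

open scoped Classical

theorem ext_of_eqOn {p q : EDCond I} (hlen : p.len = q.len) (hdom : p.dom = q.dom)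
    (hf : ∀ α ∈ p.dom, ∀ i < p.len, p.f α i = q.f α i) : p = q := by
  refine EDCond.ext hlen hdom (funext₂ fun α i => ?_)
  by_cases hα : α ∈ p.dom ∧ i < p.len
  · exact hf α hα.1 i hα.2
  · rw [not_and_or, not_lt] at hα
    rw [p.junk α i hα, q.junk α i (hdom ▸ hlen ▸ hα)]

noncomputable def ofFun (n : ℕ) (d : Finset I) (g : I → ℕ → ℕ) : EDCond I where
  len := n
  dom := d
  f α i := if α ∈ d ∧ i < n then g α i else 0
  junk _ _ h := if_neg (not_and_or.2 (h.imp_right not_lt.2))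

theorem f_ofFun {n : ℕ} {d : Finset I} (g : I → ℕ → ℕ) {α : I} (hα : α ∈ d) {i : ℕ}
    (hi : i < n) : (ofFun n d g).f α i = g α i :=
  if_pos ⟨hα, hi⟩

theorem countable_setOf_dom_eq (d : Finset I) : {p : EDCond I | p.dom = d}.Countable := by
  let code : EDCond I → ℕ × (d → List ℕ) := fun p =>
    (p.len, fun α => List.ofFn fun i : Fin p.len => p.f α i)
  refine (Set.mapsTo_univ code _).countable_of_injOn (fun p hp q hq hpq => ?_) Set.countable_univ
  simp only [code, Prod.mk.injEq, funext_iff] at hpq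
  obtain ⟨hlen, hcode⟩ := hpq
  refine ext_of_eqOn hlen (hp.trans hq.symm) fun α hα i hi => ?_
  have := congrArg (·[i]?) (hcode ⟨α, hp ▸ hα⟩)
  simpa [hi, hlen ▸ hi] using this

noncomputable def restrict (p : EDCond I) (J : Set I) : EDCond I :=
  ofFun p.len (p.dom.filter (· ∈ J)) p.f

theorem restrict_mem_supportedIn (p : EDCond I) (J : Set I) :
    p.restrict J ∈ supportedIn dom J :=
  fun _ hα => (Finset.mem_filter.1 hα).2

noncomputable def freshValue (q : EDCond I) (d : Finset I) (i : ℕ) (α : I) : ℕ :=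
  (q.dom.sup fun β => q.f β i) + 1 + d.toList.idxOf α

theorem f_lt_freshValue (q : EDCond I) (d : Finset I) {β : I} (hβ : β ∈ q.dom) (i : ℕ)
    (α : I) : q.f β i < q.freshValue d i α := by
  have := Finset.le_sup (f := fun β => q.f β i) hβ
  unfold freshValue
  omega

theorem freshValue_injOn (q : EDCond I) {d : Finset I} (i : ℕ) :
    Set.InjOn (q.freshValue d i) d := by
  intro α hα β hβ h
  unfold freshValue at h
  exact (List.idxOf_inj (l := d.toList) (by simpa using hα)).1 (by convert Nat.add_left_cancel h)

noncomputable def amalgam (q p : EDCond I) : EDCond I :=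
  ofFun q.len (q.dom ∪ p.dom) fun α i =>
    if α ∈ q.dom then q.f α i else if i < p.len then p.f α i else q.freshValue p.dom i α

theorem amalgam_le_left (q p : EDCond I) : amalgam q p ≤ q :=
  ⟨Finset.subset_union_left, le_rfl,
    fun _ hα _ hi => (f_ofFun _ (Finset.mem_union_left _ hα) hi).trans (if_pos hα),
    fun _ h₁ h₂ => absurd h₂ (not_lt.2 h₁)⟩

theorem amalgam_le_right {q p : EDCond I} {J : Set I} (hq : q ≤ p.restrict J)
    (hqJ : q ∈ supportedIn dom J) : amalgam q p ≤ p := by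
  obtain ⟨-, hlen, hval, hdist⟩ := hq
  have hmem : ∀ α ∈ p.dom, α ∈ q.dom → α ∈ (p.restrict J).dom :=
    fun _ hαp hαq => Finset.mem_filter.2 ⟨hαp, hqJ hαq⟩
  have hagree : ∀ α ∈ p.dom, α ∈ q.dom → ∀ i < p.len, q.f α i = p.f α i :=
    fun α hαp hαq i hi => (hval α (hmem α hαp hαq) i hi).trans (f_ofFun _ (hmem α hαp hαq) hi)
  refine ⟨Finset.subset_union_right, hlen, fun α hα i hi => ?_,
    fun i h₁ (h₂ : i < q.len) α hα β hβ hαβ => ?_⟩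
  · rw [amalgam, f_ofFun _ (Finset.mem_union_right _ hα) (hi.trans_le hlen)]
    split_ifs with hαq
    · exact hagree α hα hαq i hi
    · rfl
  · rw [amalgam, f_ofFun _ (Finset.mem_union_right _ hα) h₂,
      f_ofFun _ (Finset.mem_union_right _ hβ) h₂]
    simp only [not_lt.2 h₁, if_false]
    split_ifs with hαq hβq hβq
    · exact hdist i h₁ h₂ α (hmem α hα hαq) β (hmem β hβ hβq) hαβ
    · exact (q.f_lt_freshValue _ hαq i β).ne
    · exact (q.f_lt_freshValue _ hβq i α).ne'
    · exact hαβ ∘ q.freshValue_injOn i hα hβ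

theorem isRegularSubposet_supportedIn (J : Set I) : IsRegularSubposet (supportedIn dom J) :=
  fun p => ⟨p.restrict J, p.restrict_mem_supportedIn J,
    fun q hqJ hq => ⟨amalgam q p, amalgam_le_left q p, amalgam_le_right hq hqJ⟩⟩

end EDCond

theorem stmt9 (I : Type u) : SemiCohenPoset (EDCond I) :=
  ⟨_, isClubIn_supportedIn EDCond.countable_setOf_dom_eq, by
    rintro _ ⟨J, -, rfl⟩
    exact EDCond.isRegularSubposet_supportedIn J⟩
end

section
/- Let I be a set and let F be a filter on the eventually-different poset P_ed(I) such that F meets D_{a,n} = {p : a ⊆ dom(p), n_p ≥ n} for every finite a ⊆ I and every n ∈ ℕ. Then for each α ∈ I the union f_α = ⋃{p(α) : p ∈ F, α ∈ dom(p)} is a well-defined total function from ℕ to ℕ, and for all α ≠ β in I one has f_α(i) ≠ f_β(i) for all but finitely many i ∈ ℕ. -/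
universe u v

/-- A filter on a poset: upward closed and downward directed. -/
def IsPosetFilter {P : Type u} [Preorder P] (F : Set P) : Prop :=
  (∀ p ∈ F, ∀ q, p ≤ q → q ∈ F) ∧ ∀ p ∈ F, ∀ q ∈ F, ∃ r ∈ F, r ≤ p ∧ r ≤ q

/-! Conditions in a directed family agree wherever they are both defined, so their union is a
function; density makes it total. Once `α` and `β` both lie in the domain of some `p ∈ F`, every
`r ∈ F` below `p` keeps `α` and `β` apart at every coordinate `i ≥ p.len`, and density provides
such an `r` defined at `i`. -/

namespace EDCond

variable {I : Type u} {p q : EDCond I} {α β : I} {i : ℕ}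

theorem dom_subset_of_le (h : p ≤ q) : q.dom ⊆ p.dom := h.1

theorem len_le_of_le (h : p ≤ q) : q.len ≤ p.len := h.2.1

theorem f_eq_of_le (h : p ≤ q) (hα : α ∈ q.dom) (hi : i < q.len) : p.f α i = q.f α i :=
  h.2.2.1 α hα i hi

theorem f_ne_of_le (h : p ≤ q) (hα : α ∈ q.dom) (hβ : β ∈ q.dom) (hαβ : α ≠ β)
    (hqi : q.len ≤ i) (hip : i < p.len) : p.f α i ≠ p.f β i :=
  h.2.2.2 i hqi hip α hα β hβ hαβ

theorem f_eq_of_isPosetFilter {F : Set (EDCond I)} (hF : IsPosetFilter F) (hp : p ∈ F)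
    (hq : q ∈ F) (hαp : α ∈ p.dom) (hαq : α ∈ q.dom) (hip : i < p.len) (hiq : i < q.len) :
    p.f α i = q.f α i := by
  obtain ⟨r, -, hrp, hrq⟩ := hF.2 p hp q hq
  rw [← f_eq_of_le hrp hαp hip, ← f_eq_of_le hrq hαq hiq]

open Classical in
/-- The generic function `f_α = ⋃ {p(α) : p ∈ F, α ∈ dom p}`, set to `0` where no condition of
`F` is defined. -/
noncomputable def genericFun (F : Set (EDCond I)) (α : I) (i : ℕ) : ℕ :=
  if h : ∃ p ∈ F, α ∈ p.dom ∧ i < p.len then h.choose.f α i else 0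

theorem genericFun_eq {F : Set (EDCond I)} (hF : IsPosetFilter F) (hp : p ∈ F)
    (hα : α ∈ p.dom) (hi : i < p.len) : genericFun F α i = p.f α i := by
  have h : ∃ p ∈ F, α ∈ p.dom ∧ i < p.len := ⟨p, hp, hα, hi⟩
  obtain ⟨hq, hαq, hiq⟩ := h.choose_spec
  rw [genericFun, dif_pos h]
  exact f_eq_of_isPosetFilter hF hq hp hαq hα hiq hi

theorem genericFun_ne {F : Set (EDCond I)} (hF : IsPosetFilter F) (hp : p ∈ F)
    (hαp : α ∈ p.dom) (hβp : β ∈ p.dom) (hαβ : α ≠ β) (hpi : p.len ≤ i) (hq : q ∈ F)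
    (hαq : α ∈ q.dom) (hβq : β ∈ q.dom) (hiq : i < q.len) :
    genericFun F α i ≠ genericFun F β i := by
  obtain ⟨r, hr, hrp, hrq⟩ := hF.2 p hp q hq
  have hir : i < r.len := hiq.trans_le (len_le_of_le hrq)
  rw [genericFun_eq hF hr (dom_subset_of_le hrq hαq) hir,
    genericFun_eq hF hr (dom_subset_of_le hrq hβq) hir]
  exact f_ne_of_le hrp hαp hβp hαβ hpi hir

end EDCond

open EDCond in
theorem stmt11 {I : Type u} (F : Set (EDCond I)) (hF : IsPosetFilter F)
    (hD : ∀ (a : Finset I) (n : ℕ), ∃ p ∈ F, a ⊆ p.dom ∧ n ≤ p.len) :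
    ∃ f : I → ℕ → ℕ,
      (∀ p ∈ F, ∀ α ∈ p.dom, ∀ i < p.len, f α i = p.f α i) ∧
      (∀ α : I, ∀ i : ℕ, ∃ p ∈ F, α ∈ p.dom ∧ i < p.len) ∧
      ∀ α β : I, α ≠ β → ∃ N, ∀ i, N ≤ i → f α i ≠ f β i := by
  classical
  refine ⟨genericFun F, fun p hp α hα i hi => genericFun_eq hF hp hα hi, ?_, ?_⟩
  · intro α i
    obtain ⟨p, hp, hdom, hlen⟩ := hD {α} (i + 1)
    exact ⟨p, hp, hdom (Finset.mem_singleton_self α), hlen⟩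
  · intro α β hαβ
    have hpair : α ∈ ({α, β} : Finset I) ∧ β ∈ ({α, β} : Finset I) := by simp
    obtain ⟨p, hp, hdomp, -⟩ := hD {α, β} 0
    refine ⟨p.len, fun i hi => ?_⟩
    obtain ⟨q, hq, hdomq, hlenq⟩ := hD {α, β} (i + 1)
    exact genericFun_ne hF hp (hdomp hpair.1) (hdomp hpair.2) hαβ hi hq (hdomq hpair.1)
      (hdomq hpair.2) hlenq
end
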